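/- arXiv:math/0703666 — 2 statements merged into one kernel-verified Lean document; each statement's English description precedes it below -/
import Mathlib

section
/- For every positive braid x in B_n^+ with x ≠ 1, setting s_1 = gcd_L(x, Δ_n) and iterating on the quotient yields a unique normal sequence (s_1, ..., s_p) of simple braids with s_p ≠ 1 and s_1 ... s_p = x. -/
/-- Relations of the braid group presentation. -/
def braidRels (n : ℕ) : Set (FreeGroup (Fin (n - 1))) :=
  {r | (∃ i j : Fin (n - 1), (i : ℕ) + 2 ≤ (j : ℕ) ∧
          r = FreeGroup.of i * FreeGroup.of j * (FreeGroup.of j * FreeGroup.of i)⁻¹) ∨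
       (∃ i j : Fin (n - 1), (i : ℕ) + 1 = (j : ℕ) ∧
          r = FreeGroup.of i * FreeGroup.of j * FreeGroup.of i *
              (FreeGroup.of j * FreeGroup.of i * FreeGroup.of j)⁻¹)}

/-- Artin's braid group `B_n`. -/
def BraidGroup (n : ℕ) : Type := PresentedGroup (braidRels n)

instance (n : ℕ) : Group (BraidGroup n) :=
  inferInstanceAs (Group (PresentedGroup (braidRels n)))

/-- The Artin generator `σ_{i+1}` (0-indexed `i`). -/
def braidGen {n : ℕ} (i : Fin (n - 1)) : BraidGroup n := PresentedGroup.of i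

/-- The positive braid monoid `B_n^+` (submonoid generated by the `σ_i`). -/
def PosBraid (n : ℕ) : Submonoid (BraidGroup n) :=
  Submonoid.closure (Set.range (braidGen (n := n)))

/-- `x` left-divides `y` (with positive quotient). -/
def DividesL {n : ℕ} (x y : BraidGroup n) : Prop := ∃ z ∈ PosBraid n, y = x * z

/-- `x` right-divides `y` (with positive quotient). -/
def DividesR {n : ℕ} (x y : BraidGroup n) : Prop := ∃ z ∈ PosBraid n, y = z * x

/-- Auxiliary: `deltaAux n m` is the Garside element `Δ_m` viewed inside `B_n`. -/
def deltaAux (n : ℕ) : ℕ → BraidGroup n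
  | 0 => 1
  | m + 1 =>
      ((List.range m).map (fun i =>
        if h : i < n - 1 then braidGen ⟨i, h⟩ else 1)).prod * deltaAux n m

/-- Garside's element `Δ_n = σ_1⋯σ_{n-1} Δ_{n-1}`. -/
def braidDelta (n : ℕ) : BraidGroup n := deltaAux n n

/-- A simple braid: a (positive) divisor of `Δ_n`. -/
def Simple {n : ℕ} (s : BraidGroup n) : Prop :=
  s ∈ PosBraid n ∧ DividesL s (braidDelta n)

/-- Normality of a pair, in the divisor form: every `σ_i` left-dividing `t`
right-divides `s`. -/
def NormalPair {n : ℕ} (s t : BraidGroup n) : Prop :=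
  ∀ i : Fin (n - 1), DividesL (braidGen i) t → DividesR (braidGen i) s

/-- `g` is the left gcd of `x` and `y` in `B_n^+`. -/
def IsLeftGcd {n : ℕ} (g x y : BraidGroup n) : Prop :=
  g ∈ PosBraid n ∧ DividesL g x ∧ DividesL g y ∧
    ∀ d ∈ PosBraid n, DividesL d x → DividesL d y → DividesL d g

/-- Normality of a pair, in the gcd form: `s = gcd_L(st, Δ_n)`. -/
def GNormal {n : ℕ} (s t : BraidGroup n) : Prop :=
  IsLeftGcd s (s * t) (braidDelta n)

/-- `u` is the left lcm of `x` and `y`. -/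
def IsLeftLcm {n : ℕ} (u x y : BraidGroup n) : Prop :=
  DividesR x u ∧ DividesR y u ∧ ∀ v, DividesR x v → DividesR y v → DividesR u v

/-- The position `i` inside `Fin n`. -/
def finL {n : ℕ} (i : Fin (n - 1)) : Fin n := ⟨i, by have := i.isLt; omega⟩

/-- The position `i + 1` inside `Fin n`. -/
def finR {n : ℕ} (i : Fin (n - 1)) : Fin n := ⟨(i : ℕ) + 1, by have := i.isLt; omega⟩

/-- `i` is a descent of the permutation `f` : `f(i) > f(i+1)`. -/
def Descent {n : ℕ} (f : Equiv.Perm (Fin n)) (i : Fin (n - 1)) : Prop :=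
  f (finR i) < f (finL i)

/-- `i` is a recoil of the permutation `f` : `f⁻¹(i) > f⁻¹(i+1)`. -/
def Recoil {n : ℕ} (f : Equiv.Perm (Fin n)) (i : Fin (n - 1)) : Prop :=
  f⁻¹ (finR i) < f⁻¹ (finL i)

/-- Braid words: letters are a generator index together with a sign
(`true` = positive letter `σ_i`, `false` = negative letter `σ_i⁻¹`). -/
abbrev BWord (n : ℕ) := List (Fin (n - 1) × Bool)

/-- The braid represented by a braid word. -/
def evalWord {n : ℕ} (w : BWord n) : BraidGroup n :=
  (w.map (fun x => if x.2 then braidGen x.1 else (braidGen x.1)⁻¹)).prod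

/-!
Garside's lemma is the heart of the matter: if `σ_i u = σ_j v` holds in the positive braid
monoid, then `u` and `v` factor through the lcm `σ_i (i \ j) = σ_j (j \ i)` of the two
generators. It is proved on words, by induction on the length and on the rewriting chain. It
makes `B_n^+` cancellative; together with `Δ_n σ_i = σ_{n-1-i} Δ_n`, which makes every positive
braid divide a power of `Δ_n`, it gives common multiples, so `B_n^+` embeds in `B_n` (an Ore
localization) and any two positive braids have an lcm, hence a gcd: a common divisor of maximal
length.

The normal form is greedy. If `s t` is normal and `t = gcd(y, Δ)` then `s = gcd(s y, Δ)`, so the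
head of every normal sequence is the gcd of its product with `Δ`. Existence follows by induction on
the length, taking `s_1 = gcd(x, Δ)`; uniqueness by peeling off these heads.
-/

theorem OreLocalization.numeratorHom_injective {R : Type*} [Monoid R] [IsLeftCancelMul R]
    {S : Submonoid R} [OreLocalization.OreSet S] :
    Function.Injective (OreLocalization.numeratorHom : R → OreLocalization S R) := by
  intro r r' h
  obtain ⟨u, v, h₁, h₂⟩ := OreLocalization.oreDiv_eq_iff.1 h
  simp only [OneMemClass.coe_one, mul_one, Submonoid.smul_def, smul_eq_mul] at h₁ h₂
  rw [h₂] at h₁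
  exact (mul_left_cancel h₁).symm

namespace BraidGroup

variable {n : ℕ}

theorem braidGen_mul_comm {i j : Fin (n - 1)} (h : (i : ℕ) + 2 ≤ j) :
    braidGen (n := n) i * braidGen j = braidGen j * braidGen i := by
  have := PresentedGroup.one_of_mem (rels := braidRels n) (Or.inl ⟨i, j, h, rfl⟩)
  rwa [map_mul, map_inv, mul_inv_eq_one, map_mul, map_mul] at this

theorem braidGen_braid {i j : Fin (n - 1)} (h : (i : ℕ) + 1 = j) :
    braidGen (n := n) i * braidGen j * braidGen i = braidGen j * braidGen i * braidGen j := by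
  have := PresentedGroup.one_of_mem (rels := braidRels n) (Or.inr ⟨i, j, h, rfl⟩)
  rwa [map_mul, map_inv, mul_inv_eq_one, map_mul, map_mul, map_mul, map_mul] at this

section Lift

variable {G : Type*} [Group G] (f : Fin (n - 1) → G)
  (hcomm : ∀ i j : Fin (n - 1), (i : ℕ) + 2 ≤ j → f i * f j = f j * f i)
  (hbraid : ∀ i j : Fin (n - 1), (i : ℕ) + 1 = j → f i * f j * f i = f j * f i * f j)

def lift : BraidGroup n →* G :=
  PresentedGroup.toGroup (rels := braidRels n) (f := f) <| by
    rintro r (⟨i, j, h, rfl⟩ | ⟨i, j, h, rfl⟩)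
    · rw [map_mul, map_inv, mul_inv_eq_one]
      simpa using hcomm i j h
    · rw [map_mul, map_inv, mul_inv_eq_one]
      simpa using hbraid i j h

theorem lift_braidGen (i : Fin (n - 1)) : lift f hcomm hbraid (braidGen i) = f i :=
  PresentedGroup.toGroup.of _

end Lift

end BraidGroup

namespace Braid

open BraidGroup

variable {n : ℕ}

/-! ### Positive words -/

abbrev Word (n : ℕ) := List (Fin (n - 1))

def Far (i j : Fin (n - 1)) : Prop := (i : ℕ) + 2 ≤ j ∨ (j : ℕ) + 2 ≤ i

def Adj (i j : Fin (n - 1)) : Prop := (i : ℕ) + 1 = j ∨ (j : ℕ) + 1 = i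

instance (i j : Fin (n - 1)) : Decidable (Adj i j) := by unfold Adj; infer_instance

section Letters

variable {i j k : Fin (n - 1)}

theorem Far.symm (h : Far i j) : Far j i := Or.symm h

theorem Adj.symm (h : Adj i j) : Adj j i := Or.symm h

theorem Far.ne (h : Far i j) : i ≠ j := by rintro rfl; unfold Far at h; omega

theorem Adj.ne (h : Adj i j) : i ≠ j := by rintro rfl; unfold Adj at h; omega

theorem Far.not_adj (h : Far i j) : ¬ Adj i j := by unfold Far at h; unfold Adj; omega

theorem eq_or_far_or_adj (i j : Fin (n - 1)) : i = j ∨ Far i j ∨ Adj i j := by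
  unfold Far Adj; rcases eq_or_ne i j with h | h
  · exact .inl h
  · have : (i : ℕ) ≠ j := Fin.val_ne_of_ne h; omega

theorem Adj.not_adj_of_adj (hij : Adj i j) (hjk : Adj j k) : ¬ Adj i k := by
  unfold Adj at *; omega

end Letters

inductive BraidRel : Word n → Word n → Prop
  | comm {i j : Fin (n - 1)} : Far i j → BraidRel [i, j] [j, i]
  | braid {i j : Fin (n - 1)} : Adj i j → BraidRel [i, j, i] [j, i, j]

inductive Step : Word n → Word n → Prop
  | rel {p q : Word n} : BraidRel p q → ∀ b, Step (p ++ b) (q ++ b)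
  | cons {u v : Word n} (i : Fin (n - 1)) : Step u v → Step (i :: u) (i :: v)

def Eqv : Word n → Word n → Prop := Relation.ReflTransGen Step

infix:50 " ≡ᵇ " => Eqv

theorem BraidRel.symm {p q : Word n} : BraidRel p q → BraidRel q p
  | .comm h => .comm h.symm
  | .braid h => .braid h.symm

theorem BraidRel.reverse {p q : Word n} : BraidRel p q → BraidRel p.reverse q.reverse
  | .comm h => .comm h.symm
  | .braid h => .braid h

theorem BraidRel.length_eq {p q : Word n} : BraidRel p q → p.length = q.length
  | .comm _ | .braid _ => rfl

namespace Step

variable {u v : Word n}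

theorem symm (h : Step u v) : Step v u := by
  induction h with
  | rel h b => exact .rel h.symm b
  | cons i _ ih => exact .cons i ih

theorem length_eq (h : Step u v) : u.length = v.length := by
  induction h with
  | rel h b => simp [h.length_eq]
  | cons i _ ih => simp [ih]

theorem append_left (a : Word n) (h : Step u v) : Step (a ++ u) (a ++ v) := by
  induction a with
  | nil => exact h
  | cons i a ih => exact .cons i ih

theorem append_right (b : Word n) (h : Step u v) : Step (u ++ b) (v ++ b) := by
  induction h with
  | rel h c => simpa using Step.rel h (c ++ b)
  | cons i _ ih => exact .cons i ih

theorem reverse (h : Step u v) : Step u.reverse v.reverse := by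
  induction h with
  | rel h b => simpa using (Step.rel h.reverse []).append_left b.reverse
  | cons i _ ih => simpa using ih.append_right [i]

theorem cons_cases {i : Fin (n - 1)} {u z : Word n} (h : Step (i :: u) z) :
    (∃ u', Step u u' ∧ z = i :: u') ∨
    (∃ c b, Far i c ∧ u = c :: b ∧ z = c :: i :: b) ∨
    (∃ c b, Adj i c ∧ u = c :: i :: b ∧ z = c :: i :: c :: b) := by
  generalize hx : i :: u = x at h
  cases h with
  | cons _ h => cases hx; exact .inl ⟨_, h, rfl⟩
  | rel h b =>
    cases h with
    | comm h => cases hx; exact .inr (.inl ⟨_, b, h, rfl, rfl⟩)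
    | braid h => cases hx; exact .inr (.inr ⟨_, b, h, rfl, rfl⟩)

end Step

namespace Eqv

variable {u v w u' v' : Word n}

@[refl, simp] theorem refl (u : Word n) : u ≡ᵇ u := Relation.ReflTransGen.refl

theorem of_eq (h : u = v) : u ≡ᵇ v := h ▸ refl u

theorem trans (h₁ : u ≡ᵇ v) (h₂ : v ≡ᵇ w) : u ≡ᵇ w := Relation.ReflTransGen.trans h₁ h₂

instance : Trans (Eqv (n := n)) Eqv Eqv := ⟨trans⟩

theorem symm (h : u ≡ᵇ v) : v ≡ᵇ u :=
  Relation.ReflTransGen.mono (fun _ _ => Step.symm) _ _ (Relation.ReflTransGen.swap _ _ h)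

theorem append_left (a : Word n) (h : u ≡ᵇ v) : a ++ u ≡ᵇ a ++ v :=
  Relation.ReflTransGen.lift (a ++ ·) (fun _ _ => Step.append_left a) _ _ h

theorem append_right (b : Word n) (h : u ≡ᵇ v) : u ++ b ≡ᵇ v ++ b :=
  Relation.ReflTransGen.lift (· ++ b) (fun _ _ => Step.append_right b) _ _ h

theorem append (h : u ≡ᵇ u') (h' : v ≡ᵇ v') : u ++ v ≡ᵇ u' ++ v' :=
  (h.append_right v).trans (h'.append_left u')

theorem cons (i : Fin (n - 1)) (h : u ≡ᵇ v) : i :: u ≡ᵇ i :: v := h.append_left [i]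

theorem reverse (h : u ≡ᵇ v) : u.reverse ≡ᵇ v.reverse :=
  Relation.ReflTransGen.lift List.reverse (fun _ _ => Step.reverse) _ _ h

theorem length_eq (h : u ≡ᵇ v) : u.length = v.length := by
  induction h with
  | refl => rfl
  | tail _ hs ih => exact ih.trans hs.length_eq

theorem comm {i j : Fin (n - 1)} (h : Far i j) (w : Word n) : i :: j :: w ≡ᵇ j :: i :: w :=
  .single (.rel (.comm h) w)

theorem braid {i j : Fin (n - 1)} (h : Adj i j) (w : Word n) :
    i :: j :: i :: w ≡ᵇ j :: i :: j :: w :=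
  .single (.rel (.braid h) w)

theorem cons_append_of_far {c : Fin (n - 1)} {p : Word n} (h : ∀ k ∈ p, Far c k) (w : Word n) :
    c :: (p ++ w) ≡ᵇ p ++ c :: w := by
  induction p with
  | nil => rfl
  | cons k p ih =>
    have hk := h k (by simp)
    exact (comm hk _).trans ((ih fun k' hk' => h k' (by simp [hk'])).cons k)

end Eqv

/-! ### Garside's lemma -/

/-- The complement `i \ j`: `σ_i (i \ j) = σ_j (j \ i)` is the least common right multiple of
`σ_i` and `σ_j`. -/
def complement (i j : Fin (n - 1)) : Word n :=
  if i = j then [] else if Adj i j then [j, i] else [j]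

theorem mem_complement {i j k : Fin (n - 1)} (h : k ∈ complement i j) : k = i ∨ k = j := by
  unfold complement at h; split_ifs at h <;> simp at h <;> tauto

theorem cons_complement_eqv (i j : Fin (n - 1)) :
    i :: complement i j ≡ᵇ j :: complement j i := by
  rcases eq_or_far_or_adj i j with rfl | h | h
  · rfl
  · simpa [complement, h.ne, h.ne.symm, h.not_adj, h.symm.not_adj] using Eqv.comm h []
  · simpa [complement, h.ne, h.ne.symm, h, h.symm] using Eqv.braid h []

/-- `σ_i u = σ_j v` factors through the lcm of `σ_i` and `σ_j`. -/
def FactorsThroughLcm (i j : Fin (n - 1)) (u v : Word n) : Prop :=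
  ∃ w, u ≡ᵇ complement i j ++ w ∧ v ≡ᵇ complement j i ++ w

section FactorsThroughLcm

variable {i j c : Fin (n - 1)} {u v b : Word n}

theorem factorsThroughLcm_self_iff : FactorsThroughLcm i i u v ↔ u ≡ᵇ v := by
  simp only [FactorsThroughLcm, complement, if_pos, List.nil_append]
  exact ⟨fun ⟨_, hu, hv⟩ => hu.trans hv.symm, fun h => ⟨v, h, .refl v⟩⟩

theorem Far.factorsThroughLcm_iff (h : Far i j) :
    FactorsThroughLcm i j u v ↔ ∃ w, u ≡ᵇ j :: w ∧ v ≡ᵇ i :: w := by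
  simp [FactorsThroughLcm, complement, h.ne, h.ne.symm, h.not_adj,
    h.symm.not_adj]

theorem Adj.factorsThroughLcm_iff (h : Adj i j) :
    FactorsThroughLcm i j u v ↔ ∃ w, u ≡ᵇ j :: i :: w ∧ v ≡ᵇ i :: j :: w := by
  simp [FactorsThroughLcm, complement, h.ne, h.ne.symm, h, h.symm]

theorem FactorsThroughLcm.of_eqv_left {u' : Word n} (h : FactorsThroughLcm i j u' v)
    (hu : u ≡ᵇ u') : FactorsThroughLcm i j u v :=
  let ⟨w, hu', hv⟩ := h; ⟨w, hu.trans hu', hv⟩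

theorem FactorsThroughLcm.of_eqv_right {v' : Word n} (h : FactorsThroughLcm i j u v')
    (hv : v ≡ᵇ v') : FactorsThroughLcm i j u v :=
  let ⟨w, hu, hv'⟩ := h; ⟨w, hu, hv.trans hv'⟩

theorem FactorsThroughLcm.cons_of_far (h : FactorsThroughLcm i j u v) (hi : Far c i)
    (hj : Far c j) : FactorsThroughLcm i j (c :: u) (c :: v) := by
  obtain ⟨w, hu, hv⟩ := h
  have hfar : ∀ {k l}, Far c k → Far c l → ∀ m ∈ complement k l, Far c m := by
    intro k l hk hl m hm
    rcases mem_complement hm with rfl | rfl <;> assumption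
  exact ⟨c :: w, (hu.cons c).trans (Eqv.cons_append_of_far (hfar hi hj) w),
    (hv.cons c).trans (Eqv.cons_append_of_far (hfar hj hi) w)⟩

end FactorsThroughLcm

def GarsideBelow (n ℓ : ℕ) : Prop :=
  ∀ ⦃i j : Fin (n - 1)⦄ ⦃u v : Word n⦄, u.length < ℓ → i :: u ≡ᵇ j :: v →
    FactorsThroughLcm i j u v

namespace GarsideBelow

variable {ℓ : ℕ} {i j c : Fin (n - 1)} {v b : Word n}

/- The induction step: the first rewriting step from `σ_i u` to `σ_j v` brings a letter `c` to
the front, by a commutation (`comm_head`) or a braid relation (`braid_head`); `H` is Garside's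
lemma for the remaining steps. -/

theorem comm_head_adj (IH : GarsideBelow n ℓ) (hic : Far i c) (hcj : Adj c j)
    (hb : b.length < ℓ) (H : FactorsThroughLcm c j (i :: b) v) :
    FactorsThroughLcm i j (c :: b) v := by
  obtain ⟨w₁, hbw₁, hv⟩ := hcj.factorsThroughLcm_iff.1 H
  have hw₁ : w₁.length < ℓ := by have := hbw₁.length_eq; simp at this; omega
  rcases eq_or_far_or_adj i j with rfl | hij | hij
  · exact (hic.symm.not_adj hcj).elim
  · obtain ⟨w₂, hb₂, hw₂⟩ := hij.factorsThroughLcm_iff.1 (IH hb hbw₁)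
    obtain ⟨w₃, hw₁₃, hw₂₃⟩ := hic.symm.factorsThroughLcm_iff.1 (IH hw₁ hw₂)
    refine hij.factorsThroughLcm_iff.2 ⟨c :: j :: w₃, ?_, ?_⟩
    · calc c :: b ≡ᵇ c :: j :: c :: w₃ := (hb₂.trans (hw₂₃.cons j)).cons c
        _ ≡ᵇ j :: c :: j :: w₃ := Eqv.braid hcj w₃
    · calc v ≡ᵇ c :: j :: i :: w₃ := hv.trans ((hw₁₃.cons j).cons c)
        _ ≡ᵇ c :: i :: j :: w₃ := (Eqv.comm hij.symm w₃).cons c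
        _ ≡ᵇ i :: c :: j :: w₃ := Eqv.comm hic.symm _
  · obtain ⟨w₂, hb₂, hw₂⟩ := hij.factorsThroughLcm_iff.1 (IH hb hbw₁)
    obtain ⟨w₃, hw₁₃, hw₂₃⟩ := hic.symm.factorsThroughLcm_iff.1 (IH hw₁ hw₂)
    have hw₂l : w₂.length < ℓ := by have := hb₂.length_eq; simp at this; omega
    obtain ⟨w₄, hw₂₄, hw₃₄⟩ := hcj.symm.factorsThroughLcm_iff.1 (IH hw₂l hw₂₃)
    refine hij.factorsThroughLcm_iff.2 ⟨c :: j :: i :: w₄, ?_, ?_⟩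
    · calc c :: b ≡ᵇ c :: j :: i :: c :: j :: w₄ := (hb₂.trans ((hw₂₄.cons i).cons j)).cons c
        _ ≡ᵇ c :: j :: c :: i :: j :: w₄ := ((Eqv.comm hic _).cons j).cons c
        _ ≡ᵇ j :: c :: j :: i :: j :: w₄ := Eqv.braid hcj _
        _ ≡ᵇ j :: c :: i :: j :: i :: w₄ := ((Eqv.braid hij.symm w₄).cons c).cons j
        _ ≡ᵇ j :: i :: c :: j :: i :: w₄ := (Eqv.comm hic.symm _).cons j
    · calc v ≡ᵇ c :: j :: i :: j :: c :: w₄ := hv.trans (((hw₁₃.trans (hw₃₄.cons i)).cons j).cons c)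
        _ ≡ᵇ c :: i :: j :: i :: c :: w₄ := (Eqv.braid hij.symm _).cons c
        _ ≡ᵇ i :: c :: j :: i :: c :: w₄ := Eqv.comm hic.symm _
        _ ≡ᵇ i :: c :: j :: c :: i :: w₄ := (((Eqv.comm hic w₄).cons j).cons c).cons i
        _ ≡ᵇ i :: j :: c :: j :: i :: w₄ := (Eqv.braid hcj _).cons i

theorem comm_head (IH : GarsideBelow n ℓ) (hic : Far i c) (hb : b.length < ℓ)
    (H : FactorsThroughLcm c j (i :: b) v) : FactorsThroughLcm i j (c :: b) v := by
  rcases eq_or_far_or_adj c j with rfl | hcj | hcj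
  · exact hic.factorsThroughLcm_iff.2 ⟨b, .refl _, (factorsThroughLcm_self_iff.1 H).symm⟩
  · obtain ⟨w, hbw, hv⟩ := hcj.factorsThroughLcm_iff.1 H
    exact ((IH hb hbw).cons_of_far hic.symm hcj).of_eqv_right hv
  · exact IH.comm_head_adj hic hcj hb H

theorem braid_head_far (IH : GarsideBelow n ℓ) (hic : Adj i c) (hcj : Far c j)
    (hb : b.length + 1 < ℓ) (H : FactorsThroughLcm c j (i :: c :: b) v) :
    FactorsThroughLcm i j (c :: i :: b) v := by
  obtain ⟨w₁, hbw₁, hv⟩ := hcj.factorsThroughLcm_iff.1 H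
  have hcb : (c :: b).length < ℓ := hb
  rcases eq_or_far_or_adj i j with rfl | hij | hij
  · exact (hcj.symm.not_adj hic).elim
  · obtain ⟨w₂, hb₂, hw₂⟩ := hij.factorsThroughLcm_iff.1 (IH hcb hbw₁)
    obtain ⟨w₃, hb₃, hw₂₃⟩ := hcj.factorsThroughLcm_iff.1 (IH (by omega) hb₂)
    refine hij.factorsThroughLcm_iff.2 ⟨c :: i :: w₃, ?_, ?_⟩
    · calc c :: i :: b ≡ᵇ c :: i :: j :: w₃ := (hb₃.cons i).cons c
        _ ≡ᵇ c :: j :: i :: w₃ := (Eqv.comm hij w₃).cons c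
        _ ≡ᵇ j :: c :: i :: w₃ := Eqv.comm hcj _
    · calc v ≡ᵇ c :: i :: c :: w₃ := hv.trans ((hw₂.trans (hw₂₃.cons i)).cons c)
        _ ≡ᵇ i :: c :: i :: w₃ := Eqv.braid hic.symm w₃
  · obtain ⟨w₂, hb₂, hw₂⟩ := hij.factorsThroughLcm_iff.1 (IH hcb hbw₁)
    obtain ⟨w₃, hb₃, hw₂₃⟩ := hcj.factorsThroughLcm_iff.1 (IH (by omega) hb₂)
    have hw₂l : w₂.length < ℓ := by have := hb₂.length_eq; simp at this; omega
    obtain ⟨w₄, hw₂₄, hw₃₄⟩ := hic.factorsThroughLcm_iff.1 (IH hw₂l hw₂₃)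
    refine hij.factorsThroughLcm_iff.2 ⟨c :: i :: j :: w₄, ?_, ?_⟩
    · calc c :: i :: b ≡ᵇ c :: i :: j :: i :: c :: w₄ :=
            (((hb₃.trans (hw₃₄.cons j)).cons i).cons c)
        _ ≡ᵇ c :: j :: i :: j :: c :: w₄ := (Eqv.braid hij _).cons c
        _ ≡ᵇ j :: c :: i :: j :: c :: w₄ := Eqv.comm hcj _
        _ ≡ᵇ j :: c :: i :: c :: j :: w₄ := (((Eqv.comm hcj.symm w₄).cons i).cons c).cons j
        _ ≡ᵇ j :: i :: c :: i :: j :: w₄ := (Eqv.braid hic.symm _).cons j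
    · calc v ≡ᵇ c :: i :: j :: c :: i :: w₄ :=
            hv.trans ((hw₂.trans (((hw₂₄.cons j).cons i))).cons c)
        _ ≡ᵇ c :: i :: c :: j :: i :: w₄ := ((Eqv.comm hcj.symm _).cons i).cons c
        _ ≡ᵇ i :: c :: i :: j :: i :: w₄ := Eqv.braid hic.symm _
        _ ≡ᵇ i :: c :: j :: i :: j :: w₄ := ((Eqv.braid hij w₄).cons c).cons i
        _ ≡ᵇ i :: j :: c :: i :: j :: w₄ := (Eqv.comm hcj _).cons i

theorem braid_head_adj (IH : GarsideBelow n ℓ) (hic : Adj i c) (hcj : Adj c j)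
    (hb : b.length + 1 < ℓ) (H : FactorsThroughLcm c j (i :: c :: b) v) :
    FactorsThroughLcm i j (c :: i :: b) v := by
  obtain ⟨w₁, hbw₁, hv⟩ := hcj.factorsThroughLcm_iff.1 H
  have hcb : (c :: b).length < ℓ := hb
  have hw₁ : w₁.length < ℓ := by have := hbw₁.length_eq; simp at this; omega
  rcases eq_or_far_or_adj i j with rfl | hij | hij
  · have hbw : b ≡ᵇ w₁ := factorsThroughLcm_self_iff.1
      (IH (by omega) (factorsThroughLcm_self_iff.1 (IH hcb hbw₁)))
    exact factorsThroughLcm_self_iff.2 (((hbw.cons i).cons c).trans hv.symm)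
  · obtain ⟨w₂, hb₂, hw₁₂⟩ := hij.factorsThroughLcm_iff.1 (IH hcb hbw₁)
    obtain ⟨w₃, hb₃, hw₂₃⟩ := hcj.factorsThroughLcm_iff.1 (IH (by omega) hb₂)
    obtain ⟨w₄, hw₁₄, hw₂₄⟩ := hic.symm.factorsThroughLcm_iff.1 (IH hw₁ hw₁₂)
    have hw₃ : (j :: w₃).length < ℓ := by
      have := hb₃.length_eq; simp at this ⊢; omega
    have hw₃₄ : j :: w₃ ≡ᵇ i :: w₄ :=
      factorsThroughLcm_self_iff.1 (IH hw₃ (hw₂₃.symm.trans hw₂₄))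
    obtain ⟨w₅, hw₃₅, hw₄₅⟩ := hij.symm.factorsThroughLcm_iff.1 (IH (by simp at hw₃; omega) hw₃₄)
    refine hij.factorsThroughLcm_iff.2 ⟨c :: i :: j :: c :: w₅, ?_, ?_⟩
    · calc c :: i :: b ≡ᵇ c :: i :: j :: c :: i :: w₅ :=
            ((hb₃.trans ((hw₃₅.cons c).cons j)).cons i).cons c
        _ ≡ᵇ c :: j :: i :: c :: i :: w₅ := (Eqv.comm hij _).cons c
        _ ≡ᵇ c :: j :: c :: i :: c :: w₅ := ((Eqv.braid hic w₅).cons j).cons c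
        _ ≡ᵇ j :: c :: j :: i :: c :: w₅ := Eqv.braid hcj _
        _ ≡ᵇ j :: c :: i :: j :: c :: w₅ := ((Eqv.comm hij.symm _).cons c).cons j
    · calc v ≡ᵇ c :: j :: i :: c :: j :: w₅ :=
            hv.trans (((hw₁₄.trans ((hw₄₅.cons c).cons i)).cons j).cons c)
        _ ≡ᵇ c :: i :: j :: c :: j :: w₅ := (Eqv.comm hij.symm _).cons c
        _ ≡ᵇ c :: i :: c :: j :: c :: w₅ := ((Eqv.braid hcj.symm w₅).cons i).cons c
        _ ≡ᵇ i :: c :: i :: j :: c :: w₅ := Eqv.braid hic.symm _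
  · exact absurd hij (hic.not_adj_of_adj hcj)

theorem braid_head (IH : GarsideBelow n ℓ) (hic : Adj i c) (hb : b.length + 1 < ℓ)
    (H : FactorsThroughLcm c j (i :: c :: b) v) : FactorsThroughLcm i j (c :: i :: b) v := by
  rcases eq_or_far_or_adj c j with rfl | hcj | hcj
  · exact hic.factorsThroughLcm_iff.2 ⟨b, .refl _, (factorsThroughLcm_self_iff.1 H).symm⟩
  · exact IH.braid_head_far hic hcj hb H
  · exact IH.braid_head_adj hic hcj hb H

theorem succ (IH : GarsideBelow n ℓ) : GarsideBelow n (ℓ + 1) := by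
  intro i j u v hu h
  suffices ∀ x, x ≡ᵇ j :: v → ∀ i u, x = i :: u → u.length < ℓ + 1 →
      FactorsThroughLcm i j u v from this _ h i u rfl hu
  intro x hx
  induction hx using Relation.ReflTransGen.head_induction_on with
  | refl =>
    rintro i u h -
    cases h
    exact factorsThroughLcm_self_iff.2 (.refl _)
  | head hs _ ih =>
    rintro i u rfl hu
    rcases hs.cons_cases with ⟨u', hu', rfl⟩ | ⟨c, b, hic, rfl, rfl⟩ | ⟨c, b, hic, rfl, rfl⟩
    · exact (ih i u' rfl (hu'.length_eq ▸ hu)).of_eqv_left (.single hu')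
    · exact IH.comm_head hic (by simpa using hu) (ih c _ rfl (by simpa using hu))
    · exact IH.braid_head hic (by simpa using hu) (ih c _ rfl (by simpa using hu))

end GarsideBelow

theorem garsideBelow : ∀ ℓ, GarsideBelow n ℓ
  | 0 => fun _ _ _ _ h => absurd h (Nat.not_lt_zero _)
  | ℓ + 1 => (garsideBelow ℓ).succ

/-- Garside's lemma. -/
theorem Eqv.factorsThroughLcm {i j : Fin (n - 1)} {u v : Word n} (h : i :: u ≡ᵇ j :: v) :
    FactorsThroughLcm i j u v :=
  garsideBelow _ (Nat.lt_succ_self _) h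

theorem Eqv.of_cons {i : Fin (n - 1)} {u v : Word n} (h : i :: u ≡ᵇ i :: v) : u ≡ᵇ v :=
  factorsThroughLcm_self_iff.1 h.factorsThroughLcm

theorem Eqv.of_append_left {a u v : Word n} (h : a ++ u ≡ᵇ a ++ v) : u ≡ᵇ v := by
  induction a with
  | nil => exact h
  | cons i a ih => exact ih h.of_cons

theorem Eqv.of_append_right {a u v : Word n} (h : u ++ a ≡ᵇ v ++ a) : u ≡ᵇ v := by
  have := (Eqv.of_append_left (a := a.reverse) (u := u.reverse) (v := v.reverse)
    (by simpa using h.reverse)).reverse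
  rwa [List.reverse_reverse, List.reverse_reverse] at this

/-! ### The Garside element -/

/-- The word `σ_1 σ_2 ⋯ σ_k` (letters `0, …, k - 1`); letters `≥ n - 1` are dropped, as in
`deltaAux`. -/
def cycleWord (n : ℕ) : ℕ → Word n
  | 0 => []
  | k + 1 => cycleWord n k ++ (if h : k < n - 1 then [⟨k, h⟩] else [])

def deltaWord (n : ℕ) : ℕ → Word n
  | 0 => []
  | m + 1 => cycleWord n m ++ deltaWord n m

theorem cycleWord_succ {k : ℕ} (h : k < n - 1) :
    cycleWord n (k + 1) = cycleWord n k ++ [⟨k, h⟩] := by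
  simp [cycleWord, h]

theorem lt_of_mem_cycleWord {k : ℕ} {s : Fin (n - 1)} (h : s ∈ cycleWord n k) : (s : ℕ) < k := by
  induction k with
  | zero => simp [cycleWord] at h
  | succ k ih =>
    simp only [cycleWord, List.mem_append] at h
    rcases h with h | h
    · exact (ih h).trans k.lt_succ_self
    · split_ifs at h <;> simp_all

theorem lt_of_mem_deltaWord {m : ℕ} {s : Fin (n - 1)} (h : s ∈ deltaWord n m) :
    (s : ℕ) + 1 < m := by
  induction m with
  | zero => simp [deltaWord] at h
  | succ m ih =>
    simp only [deltaWord, List.mem_append] at h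
    rcases h with h | h
    · exact Nat.succ_lt_succ (lt_of_mem_cycleWord h)
    · exact (ih h).trans m.lt_succ_self

theorem append_singleton_eqv_of_far {t : Fin (n - 1)} {w : Word n} (h : ∀ s ∈ w, Far t s) :
    w ++ [t] ≡ᵇ t :: w := by
  simpa using (Eqv.cons_append_of_far h []).symm

theorem cycleWord_append_eqv {k : ℕ} (hk : k ≤ n - 1) {i j : Fin (n - 1)}
    (hi : (i : ℕ) + 1 < k) (hj : (j : ℕ) = i + 1) : cycleWord n k ++ [i] ≡ᵇ j :: cycleWord n k := by
  induction k with
  | zero => omega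
  | succ k ih =>
    have hkn : k < n - 1 := by omega
    rw [cycleWord_succ hkn]
    rcases Nat.lt_or_ge ((i : ℕ) + 1) k with h | h
    · have hfar : Far (⟨k, hkn⟩ : Fin (n - 1)) i := .inr (by simp; omega)
      calc cycleWord n k ++ [⟨k, hkn⟩] ++ [i] ≡ᵇ cycleWord n k ++ [i] ++ [⟨k, hkn⟩] := by
            simpa using (Eqv.comm hfar []).append_left (cycleWord n k)
        _ ≡ᵇ j :: cycleWord n k ++ [⟨k, hkn⟩] := (ih (by omega) h).append_right _
    · obtain rfl : k = (i : ℕ) + 1 := by omega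
      have hj' : (⟨(i : ℕ) + 1, hkn⟩ : Fin (n - 1)) = j := Fin.ext hj.symm
      rw [hj', cycleWord_succ i.isLt]
      have hfar : ∀ s ∈ cycleWord n i, Far j s := fun s hs => by
        have := lt_of_mem_cycleWord hs; exact .inr (by omega)
      calc cycleWord n i ++ [i] ++ [j] ++ [i] ≡ᵇ cycleWord n i ++ [j, i, j] := by
            simpa using (Eqv.braid (.inl hj.symm) []).append_left (cycleWord n i)
        _ ≡ᵇ j :: cycleWord n i ++ [i, j] := by
            simpa using (append_singleton_eqv_of_far hfar).append_right [i, j]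
        _ = j :: (cycleWord n i ++ [i] ++ [j]) := by simp

theorem exists_cycleWord_eq_cons (h : 0 < n - 1) (k : ℕ) :
    ∃ t, cycleWord n (k + 1) = ⟨0, h⟩ :: t := by
  induction k with
  | zero => exact ⟨[], by simp [cycleWord, h]⟩
  | succ k ih =>
    obtain ⟨t, ht⟩ := ih
    exact ⟨t ++ _, by rw [cycleWord, ht]; rfl⟩

theorem exists_deltaWord_eqv_cons {m : ℕ} (hm : m ≤ n) {i : Fin (n - 1)} (hi : (i : ℕ) + 1 < m) :
    ∃ w, deltaWord n m ≡ᵇ i :: w := by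
  induction m generalizing i with
  | zero => omega
  | succ m ih =>
    rcases Nat.eq_zero_or_pos (i : ℕ) with h0 | hpos
    · obtain ⟨k, rfl⟩ : ∃ k, m = k + 1 := Nat.exists_eq_succ_of_ne_zero (by omega)
      obtain ⟨t, ht⟩ := exists_cycleWord_eq_cons (n := n) (by omega) k
      rw [show (⟨0, _⟩ : Fin (n - 1)) = i from Fin.ext h0.symm] at ht
      exact ⟨t ++ deltaWord n (k + 1), .of_eq (by simp [deltaWord, ht])⟩
    · let i' : Fin (n - 1) := ⟨i - 1, by omega⟩
      obtain ⟨w, hw⟩ := ih (by omega) (i := i') (by simp [i']; omega)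
      refine ⟨cycleWord n m ++ w, ?_⟩
      calc deltaWord n (m + 1) ≡ᵇ cycleWord n m ++ [i'] ++ w := by
            simpa [deltaWord] using hw.append_left (cycleWord n m)
        _ ≡ᵇ i :: cycleWord n m ++ w :=
            (cycleWord_append_eqv (by omega) (by simp [i']; omega)
              (by simp [i']; omega)).append_right w

theorem deltaWord_succ_eqv {m : ℕ} (hm : m ≤ n - 1) :
    deltaWord n (m + 1) ≡ᵇ deltaWord n m ++ (cycleWord n m).reverse := by
  induction m with
  | zero => rfl
  | succ m ih =>
    have hmn : m < n - 1 := by omega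
    have hfar : ∀ s ∈ deltaWord n m, Far (⟨m, hmn⟩ : Fin (n - 1)) s := fun s hs => by
      have := lt_of_mem_deltaWord hs; exact .inr (by simp; omega)
    calc deltaWord n (m + 2) ≡ᵇ cycleWord n (m + 1) ++ (deltaWord n m ++ (cycleWord n m).reverse) :=
          (ih (by omega)).append_left _
      _ ≡ᵇ cycleWord n m ++ (deltaWord n m ++ [⟨m, hmn⟩]) ++ (cycleWord n m).reverse := by
          simpa [cycleWord_succ hmn] using
            (((append_singleton_eqv_of_far hfar).symm.append_right _).append_left (cycleWord n m))
      _ = deltaWord n (m + 2 - 1) ++ (cycleWord n (m + 1)).reverse := by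
          simp [deltaWord, cycleWord_succ hmn]

theorem deltaWord_append_singleton_eqv {m : ℕ} (hm : m ≤ n) {i j : Fin (n - 1)}
    (hi : (i : ℕ) + 1 < m) (hj : (j : ℕ) = m - 2 - i) :
    deltaWord n m ++ [i] ≡ᵇ j :: deltaWord n m := by
  induction m generalizing i j with
  | zero => omega
  | succ m ih =>
    rcases Nat.lt_or_ge ((i : ℕ) + 1) m with h | h
    · let j' : Fin (n - 1) := ⟨m - 2 - i, by omega⟩
      calc deltaWord n (m + 1) ++ [i] ≡ᵇ cycleWord n m ++ [j'] ++ deltaWord n m := by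
            simpa [deltaWord] using (ih (by omega) h rfl).append_left (cycleWord n m)
        _ ≡ᵇ j :: cycleWord n m ++ deltaWord n m :=
            (cycleWord_append_eqv (by omega) (by simp [j']; omega)
              (by simp [j']; omega)).append_right _
    -- The induction hypothesis does not reach `σ_i`: use `Δ_{m+1} = Δ_m · (cycleWord n m).reverse`.
    · rcases Nat.lt_or_ge m 2 with hm2 | hm2
      · obtain rfl : m = 1 := by omega
        obtain rfl : j = i := Fin.ext (by omega)
        have hD : deltaWord n (1 + 1) = [j] := by
          rw [show j = ⟨0, by omega⟩ from Fin.ext (by simp; omega)]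
          simp [deltaWord, cycleWord, show 0 < n - 1 by omega]
        rw [hD]
        rfl
      · let i' : Fin (n - 1) := ⟨i - 1, by omega⟩
        have hrev : (cycleWord n m).reverse ++ [i] ≡ᵇ i' :: (cycleWord n m).reverse := by
          simpa using (cycleWord_append_eqv (by omega) (i := i') (j := i) (by simp [i']; omega)
            (by simp [i']; omega)).reverse.symm
        calc deltaWord n (m + 1) ++ [i]
            ≡ᵇ deltaWord n m ++ ((cycleWord n m).reverse ++ [i]) := by
              simpa using (deltaWord_succ_eqv (by omega)).append_right [i]
          _ ≡ᵇ deltaWord n m ++ [i'] ++ (cycleWord n m).reverse := by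
              simpa using hrev.append_left (deltaWord n m)
          _ ≡ᵇ j :: deltaWord n m ++ (cycleWord n m).reverse :=
              (ih (by omega) (by simp [i']; omega) (by simp [i']; omega)).append_right _
          _ ≡ᵇ j :: deltaWord n (m + 1) := ((deltaWord_succ_eqv (by omega)).symm.cons j)

def flip (i : Fin (n - 1)) : Fin (n - 1) := ⟨n - 2 - i, by omega⟩

theorem flip_flip (i : Fin (n - 1)) : flip (flip i) = i := Fin.ext (by simp [flip]; omega)

theorem deltaWord_append_eqv (u : Word n) :
    deltaWord n n ++ u ≡ᵇ u.map flip ++ deltaWord n n := by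
  induction u with
  | nil => simp
  | cons i u ih =>
    calc deltaWord n n ++ i :: u ≡ᵇ flip i :: deltaWord n n ++ u := by
          simpa using (deltaWord_append_singleton_eqv le_rfl (i := i) (by omega) rfl).append_right u
      _ ≡ᵇ (i :: u).map flip ++ deltaWord n n := ih.cons _

theorem append_deltaWord_eqv (u : Word n) :
    u ++ deltaWord n n ≡ᵇ deltaWord n n ++ u.map flip := by
  simpa [Function.comp_def, flip_flip] using (deltaWord_append_eqv (u.map flip)).symm

def deltaPow (n k : ℕ) : Word n := (List.replicate k (deltaWord n n)).flatten

theorem exists_append_deltaPow_eqv (w : Word n) (k : ℕ) :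
    ∃ w', w ++ deltaPow n k ≡ᵇ deltaPow n k ++ w' := by
  induction k generalizing w with
  | zero => exact ⟨w, by simp [deltaPow]⟩
  | succ k ih =>
    obtain ⟨w', hw'⟩ := ih (w.map flip)
    refine ⟨w', ?_⟩
    calc w ++ deltaPow n (k + 1) ≡ᵇ deltaWord n n ++ (w.map flip ++ deltaPow n k) := by
          simpa [deltaPow, List.replicate_succ] using (append_deltaWord_eqv w).append_right _
      _ ≡ᵇ deltaPow n (k + 1) ++ w' := by
          simpa [deltaPow, List.replicate_succ] using hw'.append_left (deltaWord n n)

theorem exists_append_eqv_deltaPow (u : Word n) {k : ℕ} (hk : u.length ≤ k) :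
    ∃ a, u ++ a ≡ᵇ deltaPow n k := by
  induction u generalizing k with
  | nil => exact ⟨deltaPow n k, by simp⟩
  | cons i u ih =>
    obtain ⟨k, rfl⟩ : ∃ k', k = k' + 1 := Nat.exists_eq_succ_of_ne_zero (by simp at hk; omega)
    obtain ⟨a, ha⟩ := ih (k := k) (by simp at hk; omega)
    obtain ⟨w, hw⟩ := exists_deltaWord_eqv_cons le_rfl (i := i) (by omega)
    obtain ⟨w', hw'⟩ := exists_append_deltaPow_eqv w k
    refine ⟨a ++ w', ?_⟩
    calc i :: u ++ (a ++ w') ≡ᵇ i :: (deltaPow n k ++ w') := by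
          simpa using (ha.append_right w').cons i
      _ ≡ᵇ i :: w ++ deltaPow n k := hw'.symm.cons i
      _ ≡ᵇ deltaPow n (k + 1) := by
          simpa [deltaPow, List.replicate_succ] using (hw.append_right (deltaPow n k)).symm

theorem exists_append_eqv_append (u v : Word n) : ∃ a b, u ++ a ≡ᵇ v ++ b := by
  obtain ⟨a, ha⟩ := exists_append_eqv_deltaPow u (le_max_left u.length v.length)
  obtain ⟨b, hb⟩ := exists_append_eqv_deltaPow v (le_max_right u.length v.length)
  exact ⟨a, b, ha.trans hb.symm⟩

theorem exists_prepend_eqv_prepend (u v : Word n) : ∃ a b, a ++ u ≡ᵇ b ++ v := by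
  obtain ⟨a, b, h⟩ := exists_append_eqv_append u.reverse v.reverse
  exact ⟨a.reverse, b.reverse, by simpa using h.reverse⟩

/-! ### From words to `B_n` -/

def ofWord (w : Word n) : BraidGroup n := (w.map braidGen).prod

@[simp] theorem ofWord_nil : ofWord ([] : Word n) = 1 := rfl

@[simp] theorem ofWord_cons (i : Fin (n - 1)) (w : Word n) :
    ofWord (i :: w) = braidGen i * ofWord w := by
  simp [ofWord]

@[simp] theorem ofWord_append (u v : Word n) : ofWord (u ++ v) = ofWord u * ofWord v := by
  simp [ofWord]

theorem BraidRel.ofWord_eq {p q : Word n} : BraidRel p q → ofWord p = ofWord q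
  | .comm (.inl h) => by simpa using braidGen_mul_comm h
  | .comm (.inr h) => by simpa using (braidGen_mul_comm h).symm
  | .braid (.inl h) => by simpa [mul_assoc] using braidGen_braid h
  | .braid (.inr h) => by simpa [mul_assoc] using (braidGen_braid h).symm

theorem Step.ofWord_eq {u v : Word n} (h : Step u v) : ofWord u = ofWord v := by
  induction h with
  | rel h b => simp [h.ofWord_eq]
  | cons i _ ih => simp [ih]

theorem Eqv.ofWord_eq {u v : Word n} (h : u ≡ᵇ v) : ofWord u = ofWord v := by
  induction h with
  | refl => rfl
  | tail _ hs ih => exact ih.trans hs.ofWord_eq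

theorem braidGen_mem (i : Fin (n - 1)) : braidGen i ∈ PosBraid n :=
  Submonoid.subset_closure ⟨i, rfl⟩

theorem ofWord_mem (w : Word n) : ofWord w ∈ PosBraid n :=
  list_prod_mem fun _ hx => by
    obtain ⟨i, -, rfl⟩ := List.mem_map.1 hx
    exact braidGen_mem i

theorem mem_posBraid_iff {x : BraidGroup n} : x ∈ PosBraid n ↔ ∃ w : Word n, ofWord w = x := by
  refine ⟨fun hx => ?_, fun ⟨w, hw⟩ => hw ▸ ofWord_mem w⟩
  induction hx using Submonoid.closure_induction with
  | mem y hy => obtain ⟨i, rfl⟩ := hy; exact ⟨[i], by simp⟩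
  | one => exact ⟨[], rfl⟩
  | mul y z _ _ hy hz =>
    obtain ⟨u, rfl⟩ := hy
    obtain ⟨v, rfl⟩ := hz
    exact ⟨u ++ v, ofWord_append u v⟩

theorem ofWord_cycleWord (m : ℕ) : ofWord (cycleWord n m) =
    ((List.range m).map fun i => if h : i < n - 1 then braidGen ⟨i, h⟩ else 1).prod := by
  induction m with
  | zero => rfl
  | succ m ih =>
    rw [cycleWord, ofWord_append, ih, List.range_succ, List.map_append, List.prod_append]
    by_cases h : m < n - 1 <;> simp [h]

theorem ofWord_deltaWord (m : ℕ) : ofWord (deltaWord n m) = deltaAux n m := by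
  induction m with
  | zero => rfl
  | succ m ih => rw [deltaWord, ofWord_append, ih, ofWord_cycleWord, deltaAux]

theorem ofWord_deltaWord_self : ofWord (deltaWord n n) = braidDelta n := ofWord_deltaWord n

theorem braidDelta_mem : braidDelta n ∈ PosBraid n :=
  ofWord_deltaWord_self (n := n) ▸ ofWord_mem _

theorem braidGen_dividesL_braidDelta (i : Fin (n - 1)) : DividesL (braidGen i) (braidDelta n) := by
  obtain ⟨w, hw⟩ := exists_deltaWord_eqv_cons le_rfl (i := i) (by omega)
  exact ⟨ofWord w, ofWord_mem w, by rw [← ofWord_deltaWord_self, hw.ofWord_eq, ofWord_cons]⟩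

theorem braidDelta_dividesL_mul_braidDelta {s : BraidGroup n} (hs : s ∈ PosBraid n) :
    DividesL (braidDelta n) (s * braidDelta n) := by
  obtain ⟨u, rfl⟩ := mem_posBraid_iff.1 hs
  refine ⟨ofWord (u.map flip), ofWord_mem _, ?_⟩
  simpa [ofWord_deltaWord_self] using (append_deltaWord_eqv u).ofWord_eq

def braidCon (n : ℕ) : Con (FreeMonoid (Fin (n - 1))) where
  r u v := u.toList ≡ᵇ v.toList
  iseqv := ⟨fun _ => .refl _, Eqv.symm, Eqv.trans⟩
  mul' h₁ h₂ := by simpa using h₁.append h₂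

/-- The positive braid monoid `B_n^+` by generators and relations; `PosBraid n` is its image
in `B_n`. -/
abbrev PosMonoid (n : ℕ) := (braidCon n).Quotient

namespace PosMonoid

def mk (w : Word n) : PosMonoid n := (FreeMonoid.ofList w : FreeMonoid (Fin (n - 1)))

theorem mk_append (u v : Word n) : mk (u ++ v) = mk u * mk v := rfl

theorem mk_eq_mk_iff {u v : Word n} : mk u = mk v ↔ u ≡ᵇ v := Con.eq _

theorem mk_surjective : Function.Surjective (mk (n := n)) := fun x =>
  Con.induction_on x fun w => ⟨w.toList, rfl⟩

instance : IsCancelMul (PosMonoid n) where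
  mul_left_cancel a b c h := by
    obtain ⟨u, rfl⟩ := mk_surjective a
    obtain ⟨v, rfl⟩ := mk_surjective b
    obtain ⟨w, rfl⟩ := mk_surjective c
    exact mk_eq_mk_iff.2 (Eqv.of_append_left (mk_eq_mk_iff.1 h))
  mul_right_cancel a b c h := by
    obtain ⟨u, rfl⟩ := mk_surjective a
    obtain ⟨v, rfl⟩ := mk_surjective b
    obtain ⟨w, rfl⟩ := mk_surjective c
    exact mk_eq_mk_iff.2 (Eqv.of_append_right (mk_eq_mk_iff.1 h))

theorem exists_mul_eq_mul (x y : PosMonoid n) : ∃ a b : PosMonoid n, a * x = b * y := by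
  obtain ⟨u, rfl⟩ := mk_surjective x
  obtain ⟨v, rfl⟩ := mk_surjective y
  obtain ⟨a, b, h⟩ := exists_prepend_eqv_prepend u v
  exact ⟨mk a, mk b, mk_eq_mk_iff.2 h⟩

/-- `B_n^+` satisfies the left Ore condition, by cancellativity and common left multiples. -/
noncomputable instance : OreLocalization.OreSet (⊤ : Submonoid (PosMonoid n)) where
  ore_right_cancel _ _ _ h := ⟨1, by simp [mul_right_cancel h]⟩
  oreNum x s := (exists_mul_eq_mul x s).choose_spec.choose
  oreDenom x s := ⟨(exists_mul_eq_mul x s).choose, trivial⟩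
  ore_eq x s := (exists_mul_eq_mul x s).choose_spec.choose_spec

abbrev Frac (n : ℕ) := OreLocalization (⊤ : Submonoid (PosMonoid n)) (PosMonoid n)

noncomputable def genUnit (i : Fin (n - 1)) : (Frac n)ˣ :=
  OreLocalization.numeratorUnit ⟨mk [i], trivial⟩

theorem genUnit_val (i : Fin (n - 1)) :
    (genUnit i : Frac n) = OreLocalization.numeratorHom (mk [i]) := rfl

theorem genUnit_mul_comm {i j : Fin (n - 1)} (h : Far i j) :
    genUnit i * genUnit j = genUnit j * genUnit i := by
  refine Units.ext ?_
  simp only [Units.val_mul, genUnit_val, ← map_mul, ← mk_append]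
  exact congrArg _ (mk_eq_mk_iff.2 (Eqv.comm h []))

theorem genUnit_braid {i j : Fin (n - 1)} (h : Adj i j) :
    genUnit i * genUnit j * genUnit i = genUnit j * genUnit i * genUnit j := by
  refine Units.ext ?_
  simp only [Units.val_mul, genUnit_val, ← map_mul, ← mk_append]
  exact congrArg _ (mk_eq_mk_iff.2 (Eqv.braid h []))

noncomputable def toFrac : BraidGroup n →* (Frac n)ˣ :=
  lift genUnit (fun _ _ h => genUnit_mul_comm (.inl h)) (fun _ _ h => genUnit_braid (.inl h))

theorem toFrac_ofWord (w : Word n) :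
    (toFrac (ofWord w) : Frac n) = OreLocalization.numeratorHom (mk w) := by
  induction w with
  | nil => rw [ofWord_nil, map_one, Units.val_one]; exact (map_one _).symm
  | cons i w ih =>
    rw [ofWord_cons, map_mul, Units.val_mul, ih, toFrac, lift_braidGen]
    exact (map_mul OreLocalization.numeratorHom (mk [i]) (mk w)).symm

end PosMonoid

/-- `B_n^+` embeds in its group of fractions, which receives `B_n`. -/
theorem eqv_of_ofWord_eq {u v : Word n} (h : ofWord u = ofWord v) : u ≡ᵇ v := by
  refine PosMonoid.mk_eq_mk_iff.1 (OreLocalization.numeratorHom_injective (S := ⊤) ?_)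
  rw [← PosMonoid.toFrac_ofWord, ← PosMonoid.toFrac_ofWord, h]

/-! ### Length and divisibility -/

noncomputable def lengthHom : BraidGroup n →* Multiplicative ℤ :=
  lift (fun _ => .ofAdd 1) (fun _ _ _ => rfl) (fun _ _ _ => rfl)

noncomputable def len (x : BraidGroup n) : ℤ := (lengthHom x).toAdd

@[simp] theorem len_one : len (1 : BraidGroup n) = 0 := by simp [len]

@[simp] theorem len_mul (x y : BraidGroup n) : len (x * y) = len x + len y := by simp [len]

@[simp] theorem len_braidGen (i : Fin (n - 1)) : len (braidGen i) = 1 := by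
  simp [len, lengthHom, lift_braidGen]

@[simp] theorem len_ofWord (w : Word n) : len (ofWord w) = w.length := by
  induction w with
  | nil => simp
  | cons i w ih => simp [ih]; ring

theorem len_nonneg {x : BraidGroup n} (hx : x ∈ PosBraid n) : 0 ≤ len x := by
  obtain ⟨w, rfl⟩ := mem_posBraid_iff.1 hx
  simp

theorem eq_one_of_len_eq_zero {x : BraidGroup n} (hx : x ∈ PosBraid n) (h : len x = 0) :
    x = 1 := by
  obtain ⟨w, rfl⟩ := mem_posBraid_iff.1 hx
  simp_all

theorem len_pos {x : BraidGroup n} (hx : x ∈ PosBraid n) (h : x ≠ 1) : 0 < len x :=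
  (len_nonneg hx).lt_of_ne' fun h' => h (eq_one_of_len_eq_zero hx h')

theorem exists_eq_braidGen_mul {x : BraidGroup n} (hx : x ∈ PosBraid n) (h : x ≠ 1) :
    ∃ i y, y ∈ PosBraid n ∧ x = braidGen i * y := by
  obtain ⟨_ | ⟨i, w⟩, rfl⟩ := mem_posBraid_iff.1 hx
  · exact absurd rfl h
  · exact ⟨i, ofWord w, ofWord_mem w, ofWord_cons i w⟩

end Braid

section DividesL

open Braid

variable {n : ℕ} {x y z a : BraidGroup n}

@[refl] protected theorem DividesL.refl (x : BraidGroup n) : DividesL x x :=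
  ⟨1, one_mem _, (mul_one x).symm⟩

protected theorem DividesL.trans (h₁ : DividesL x y) (h₂ : DividesL y z) : DividesL x z := by
  obtain ⟨a, ha, rfl⟩ := h₁
  obtain ⟨b, hb, rfl⟩ := h₂
  exact ⟨a * b, mul_mem ha hb, mul_assoc _ _ _⟩

theorem dividesL_mul_right (hy : y ∈ PosBraid n) : DividesL x (x * y) := ⟨y, hy, rfl⟩

theorem one_dividesL (hx : x ∈ PosBraid n) : DividesL 1 x := ⟨x, hx, (one_mul x).symm⟩

theorem mul_dividesL_iff : DividesL (a * x) y ↔ DividesL x (a⁻¹ * y) := by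
  simp only [DividesL, mul_assoc, inv_mul_eq_iff_eq_mul]

theorem mul_dividesL_mul_iff_left : DividesL (a * x) (a * y) ↔ DividesL x y := by
  rw [mul_dividesL_iff, inv_mul_cancel_left]

theorem DividesL.mem (hx : x ∈ PosBraid n) (h : DividesL x y) : y ∈ PosBraid n := by
  obtain ⟨a, ha, rfl⟩ := h
  exact mul_mem hx ha

theorem DividesL.len_le (h : DividesL x y) : len x ≤ len y := by
  obtain ⟨a, ha, rfl⟩ := h
  simpa using len_nonneg ha

theorem DividesL.eq_of_len_le (h : DividesL x y) (hl : len y ≤ len x) : x = y := by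
  obtain ⟨a, ha, rfl⟩ := h
  rw [eq_one_of_len_eq_zero ha (by simp at hl; linarith [len_nonneg ha]), mul_one]

theorem DividesL.antisymm (h₁ : DividesL x y) (h₂ : DividesL y x) : x = y :=
  h₁.eq_of_len_le h₂.len_le

end DividesL

namespace Braid

open BraidGroup

variable {n : ℕ}

/-! ### Lcms and gcds -/

def IsRightLcm (u x y : BraidGroup n) : Prop :=
  ∀ m, DividesL u m ↔ DividesL x m ∧ DividesL y m

namespace IsRightLcm

variable {u x y L a b d : BraidGroup n}

theorem dividesL_left (h : IsRightLcm u x y) : DividesL x u := ((h u).1 (.refl u)).1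

theorem dividesL_right (h : IsRightLcm u x y) : DividesL y u := ((h u).1 (.refl u)).2

theorem symm (h : IsRightLcm u x y) : IsRightLcm u y x := fun m => (h m).trans and_comm

theorem mul_left (h : IsRightLcm u x y) (a : BraidGroup n) : IsRightLcm (a * u) (a * x) (a * y) :=
  fun m => by simp only [mul_dividesL_iff, h _]

theorem iff_of_dividesL (hL : IsRightLcm L a b) (had : DividesL a d) :
    IsRightLcm u d L ↔ IsRightLcm u d b := by
  have key : ∀ m, DividesL d m ∧ DividesL L m ↔ DividesL d m ∧ DividesL b m := fun m => by
    rw [hL m]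
    exact ⟨fun ⟨h₁, _, h₂⟩ => ⟨h₁, h₂⟩, fun ⟨h₁, h₂⟩ => ⟨h₁, had.trans h₁, h₂⟩⟩
  exact forall_congr' fun m => by rw [key]

end IsRightLcm

theorem isRightLcm_of_dividesL {x y : BraidGroup n} (h : DividesL x y) : IsRightLcm y x y :=
  fun _ => ⟨fun hm => ⟨h.trans hm, hm⟩, And.right⟩

theorem isRightLcm_braidGen (i j : Fin (n - 1)) :
    IsRightLcm (braidGen i * ofWord (complement i j)) (braidGen i) (braidGen j) := by
  have hij : braidGen i * ofWord (complement i j) = braidGen j * ofWord (complement j i) := by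
    simpa using (cons_complement_eqv i j).ofWord_eq
  refine fun m => ⟨fun hm => ⟨(dividesL_mul_right (ofWord_mem _)).trans hm,
    (dividesL_mul_right (ofWord_mem _)).trans (hij ▸ hm)⟩, ?_⟩
  rintro ⟨⟨p, hp, rfl⟩, ⟨q, hq, hm⟩⟩
  obtain ⟨u, rfl⟩ := mem_posBraid_iff.1 hp
  obtain ⟨v, rfl⟩ := mem_posBraid_iff.1 hq
  obtain ⟨w, hu, -⟩ :=
    (eqv_of_ofWord_eq (u := i :: u) (v := j :: v) (by simpa using hm)).factorsThroughLcm
  exact ⟨ofWord w, ofWord_mem w, by simp [hu.ofWord_eq, mul_assoc]⟩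

def LcmBelow (n N : ℕ) : Prop :=
  ∀ ⦃z d e : BraidGroup n⦄, d ∈ PosBraid n → e ∈ PosBraid n → DividesL d z → DividesL e z →
    len z < N → ∃ u, IsRightLcm u d e

/-- `lcm(σ_i d₁, σ_j) = σ_i lcm(d₁, i \ j)`, written `σ_j c'`, and then
`lcm(σ_i d₁, σ_j e₁) = σ_j lcm(c', e₁)`; both inner lcms have shorter common multiples. -/
theorem LcmBelow.exists_isRightLcm_braidGen_mul {N : ℕ} (IH : LcmBelow n N) {i j : Fin (n - 1)}
    {d₁ e₁ z : BraidGroup n} (hd₁ : d₁ ∈ PosBraid n) (he₁ : e₁ ∈ PosBraid n)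
    (hdz : DividesL (braidGen i * d₁) z) (hez : DividesL (braidGen j * e₁) z) (hz : len z < N + 1) :
    ∃ u, IsRightLcm u (braidGen i * d₁) (braidGen j * e₁) := by
  have hΛ := isRightLcm_braidGen i j
  obtain ⟨z₁, hz₁, rfl⟩ := (dividesL_mul_right hd₁).trans hdz
  have hjz : DividesL (braidGen j) (braidGen i * z₁) := (dividesL_mul_right he₁).trans hez
  have hcz : DividesL (ofWord (complement i j)) z₁ :=
    mul_dividesL_mul_iff_left.1 ((hΛ _).2 ⟨dividesL_mul_right hz₁, hjz⟩)
  obtain ⟨u₁, hu₁⟩ := IH hd₁ (ofWord_mem _) (mul_dividesL_mul_iff_left.1 hdz) hcz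
    (by simp at hz; omega)
  have hL₁ : IsRightLcm (braidGen i * u₁) (braidGen i * d₁) (braidGen j) :=
    (hΛ.iff_of_dividesL (dividesL_mul_right hd₁)).1 (hu₁.mul_left _)
  obtain ⟨c', hc', hc'eq⟩ := hL₁.dividesL_right
  obtain ⟨z₂, hz₂, hzeq⟩ := hjz
  rw [hzeq] at hdz hez hz
  rw [hc'eq] at hL₁
  have hcz₂ : DividesL c' z₂ :=
    mul_dividesL_mul_iff_left.1 ((hL₁ _).2 ⟨hdz, dividesL_mul_right hz₂⟩)
  obtain ⟨u₂, hu₂⟩ := IH hc' he₁ hcz₂ (mul_dividesL_mul_iff_left.1 hez) (by simp at hz; omega)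
  exact ⟨_, ((hL₁.symm.iff_of_dividesL (dividesL_mul_right he₁)).1 (hu₂.mul_left _).symm).symm⟩

theorem lcmBelow : ∀ N, LcmBelow n N
  | 0 => fun _ _ _ hd _ hdz _ hz => absurd hz (not_lt.2 (len_nonneg (hdz.mem hd)))
  | N + 1 => by
    intro z d e hd he hdz hez hz
    by_cases hd1 : d = 1
    · exact ⟨e, hd1 ▸ isRightLcm_of_dividesL (one_dividesL he)⟩
    by_cases he1 : e = 1
    · exact ⟨d, he1 ▸ (isRightLcm_of_dividesL (one_dividesL hd)).symm⟩
    obtain ⟨i, d₁, hd₁, rfl⟩ := exists_eq_braidGen_mul hd hd1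
    obtain ⟨j, e₁, he₁, rfl⟩ := exists_eq_braidGen_mul he he1
    exact (lcmBelow N).exists_isRightLcm_braidGen_mul hd₁ he₁ hdz hez hz

theorem exists_isRightLcm {d e : BraidGroup n} (hd : d ∈ PosBraid n) (he : e ∈ PosBraid n) :
    ∃ u, IsRightLcm u d e := by
  obtain ⟨u, rfl⟩ := mem_posBraid_iff.1 hd
  obtain ⟨v, rfl⟩ := mem_posBraid_iff.1 he
  obtain ⟨a, b, h⟩ := exists_append_eqv_append u v
  refine lcmBelow ((u ++ a).length + 1) hd he (z := ofWord (u ++ a)) ?_ ?_ (by simp)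
  · exact ⟨ofWord a, ofWord_mem a, ofWord_append u a⟩
  · exact ⟨ofWord b, ofWord_mem b, by rw [h.ofWord_eq, ofWord_append]⟩

/-- A common divisor of maximal length is a gcd, since its lcm with any common divisor is again
a common divisor. -/
theorem exists_isLeftGcd {x y : BraidGroup n} (hx : x ∈ PosBraid n) (hy : y ∈ PosBraid n) :
    ∃ g, IsLeftGcd g x y := by
  obtain ⟨_, ⟨g, ⟨hg, hgx, hgy⟩, rfl⟩, hmax⟩ := Int.exists_greatest_of_bdd
    (P := fun k => ∃ d, (d ∈ PosBraid n ∧ DividesL d x ∧ DividesL d y) ∧ len d = k)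
    ⟨len x, fun _ ⟨_, ⟨_, hdx, _⟩, hk⟩ => hk ▸ hdx.len_le⟩
    ⟨0, 1, ⟨one_mem _, one_dividesL hx, one_dividesL hy⟩, len_one⟩
  refine ⟨g, hg, hgx, hgy, fun d hd hdx hdy => ?_⟩
  obtain ⟨u, hu⟩ := exists_isRightLcm hg hd
  have hgu : g = u := hu.dividesL_left.eq_of_len_le
    (hmax _ ⟨u, ⟨hu.dividesL_left.mem hg, (hu x).2 ⟨hgx, hdx⟩, (hu y).2 ⟨hgy, hdy⟩⟩, rfl⟩)
  exact hgu ▸ hu.dividesL_right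

theorem _root_.IsLeftGcd.unique {g g' x y : BraidGroup n} (h : IsLeftGcd g x y)
    (h' : IsLeftGcd g' x y) : g = g' :=
  (h'.2.2.2 g h.1 h.2.1 h.2.2.1).antisymm (h.2.2.2 g' h'.1 h'.2.1 h'.2.2.1)

/-! ### Normal forms -/

def IsNormalForm (l : List (BraidGroup n)) (x : BraidGroup n) : Prop :=
  (∀ s ∈ l, Simple s) ∧ List.IsChain GNormal l ∧ (∀ h : l ≠ [], l.getLast h ≠ 1) ∧ l.prod = x

theorem _root_.GNormal.isLeftGcd_mul {s t y : BraidGroup n} (hst : GNormal s t)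
    (hy : y ∈ PosBraid n) (hty : IsLeftGcd t y (braidDelta n)) :
    IsLeftGcd s (s * y) (braidDelta n) := by
  obtain ⟨hs, -, hsΔ, hsmax⟩ := hst
  refine ⟨hs, dividesL_mul_right hy, hsΔ, fun d hd hdy hdΔ => ?_⟩
  obtain ⟨u, hu⟩ := exists_isRightLcm hs hd
  obtain ⟨c, hc, rfl⟩ := hu.dividesL_left
  have hcy : DividesL c y := mul_dividesL_mul_iff_left.1 ((hu _).2 ⟨dividesL_mul_right hy, hdy⟩)
  have hcΔ : DividesL c (braidDelta n) := mul_dividesL_mul_iff_left.1 ((hu _).2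
    ⟨dividesL_mul_right braidDelta_mem, hdΔ.trans (braidDelta_dividesL_mul_braidDelta hs)⟩)
  exact hsmax d hd (hu.dividesL_right.trans
    (mul_dividesL_mul_iff_left.2 (hty.2.2.2 c hc hcy hcΔ))) hdΔ

theorem gNormal_of_isLeftGcd {g y t : BraidGroup n} (hg : IsLeftGcd g (g * y) (braidDelta n))
    (ht : IsLeftGcd t y (braidDelta n)) : GNormal g t :=
  ⟨hg.1, dividesL_mul_right ht.1, hg.2.2.1, fun d hd hdt hdΔ =>
    hg.2.2.2 d hd (hdt.trans (mul_dividesL_mul_iff_left.2 ht.2.1)) hdΔ⟩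

theorem isLeftGcd_head_prod {l : List (BraidGroup n)} (hs : ∀ s ∈ l, Simple s)
    (hl : List.IsChain GNormal l) (h : l ≠ []) : IsLeftGcd (l.head h) l.prod (braidDelta n) := by
  induction l with
  | nil => exact absurd rfl h
  | cons s l ih =>
    have hs' : Simple s := hs s (by simp)
    cases l with
    | nil => simpa using ⟨hs'.1, .refl s, hs'.2, fun _ _ hd _ => hd⟩
    | cons t l =>
      have ht := ih (fun x hx => hs x (by simp [hx])) hl.tail (by simp)
      rw [List.isChain_cons_cons] at hl
      simpa using hl.1.isLeftGcd_mul (list_prod_mem fun x hx => (hs x (by simp_all)).1) ht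

theorem IsNormalForm.isLeftGcd_head {l : List (BraidGroup n)} {x : BraidGroup n}
    (h : IsNormalForm l x) (hl : l ≠ []) : IsLeftGcd (l.head hl) x (braidDelta n) :=
  h.2.2.2 ▸ isLeftGcd_head_prod h.1 h.2.1 hl

theorem IsNormalForm.eq_nil_iff {l : List (BraidGroup n)} {x : BraidGroup n}
    (h : IsNormalForm l x) : l = [] ↔ x = 1 := by
  obtain ⟨hs, -, hlast, rfl⟩ := h
  refine ⟨fun hl => by simp [hl], fun hx => by_contra fun hl => ?_⟩
  have hpos : ∀ s ∈ l, s ∈ PosBraid n := fun s hs' => (hs s hs').1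
  have hlen := congrArg (fun l => len l.prod) (List.dropLast_append_getLast hl)
  simp only [List.prod_append, List.prod_singleton, len_mul, hx, len_one] at hlen
  have := len_nonneg (list_prod_mem fun s hs' => hpos s (List.dropLast_subset l hs'))
  have := len_pos (hpos _ (List.getLast_mem hl)) (hlast hl)
  omega

theorem exists_isNormalForm_of_len_lt :
    ∀ (N : ℕ) {x : BraidGroup n}, x ∈ PosBraid n → len x < N → ∃ l, IsNormalForm l x
  | 0, _, hx, hN => absurd hN (not_lt.2 (len_nonneg hx))
  | N + 1, x, hx, hN => by
    by_cases hx1 : x = 1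
    · exact ⟨[], by simp, .nil, by simp, by simp [hx1]⟩
    obtain ⟨g, hg⟩ := exists_isLeftGcd hx braidDelta_mem
    obtain ⟨y, hy, rfl⟩ := hg.2.1
    have hg1 : g ≠ 1 := by
      rintro rfl
      obtain ⟨i, x', hx', hxeq⟩ := exists_eq_braidGen_mul hx hx1
      have := (hg.2.2.2 _ (braidGen_mem i) ⟨x', hx', hxeq⟩ (braidGen_dividesL_braidDelta i)).len_le
      simp at this
    obtain ⟨l, hl⟩ := exists_isNormalForm_of_len_lt N hy
      (by have := len_pos hg.1 hg1; simp at hN; omega)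
    obtain ⟨hls, hlc, hll, rfl⟩ := hl
    refine ⟨g :: l, ?_, ?_, ?_, rfl⟩
    · exact List.forall_mem_cons.2 ⟨⟨hg.1, hg.2.2.1⟩, hls⟩
    · cases l with
      | nil => exact .singleton g
      | cons t l =>
        exact .cons_cons (gNormal_of_isLeftGcd hg (isLeftGcd_head_prod hls hlc (by simp))) hlc
    · cases l with
      | nil => simpa using hg1
      | cons t l => simpa using hll (by simp)

theorem IsNormalForm.tail {s : BraidGroup n} {t : List (BraidGroup n)} {x : BraidGroup n}
    (h : IsNormalForm (s :: t) x) : IsNormalForm t t.prod := by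
  obtain ⟨hs, hc, hlast, -⟩ := h
  exact ⟨fun y hy => hs y (by simp [hy]), hc.tail,
    fun ht => by simpa [List.getLast_cons ht] using hlast (by simp), rfl⟩

theorem IsNormalForm.unique {l₁ l₂ : List (BraidGroup n)} {x : BraidGroup n}
    (h₁ : IsNormalForm l₁ x) (h₂ : IsNormalForm l₂ x) : l₁ = l₂ := by
  induction l₁ generalizing l₂ x with
  | nil => exact ((h₂.eq_nil_iff).2 ((h₁.eq_nil_iff).1 rfl)).symm
  | cons s t ih =>
    cases l₂ with
    | nil => exact absurd ((h₁.eq_nil_iff).2 ((h₂.eq_nil_iff).1 rfl)) (List.cons_ne_nil _ _)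
    | cons s' t' =>
      obtain rfl : s = s' :=
        (h₁.isLeftGcd_head (List.cons_ne_nil _ _)).unique (h₂.isLeftGcd_head (List.cons_ne_nil _ _))
      have ht : t.prod = t'.prod := mul_left_cancel (a := s)
        (by simpa using h₁.2.2.2.trans h₂.2.2.2.symm)
      rw [ih h₁.tail (ht ▸ h₂.tail)]

theorem exists_isNormalForm {x : BraidGroup n} (hx : x ∈ PosBraid n) : ∃ l, IsNormalForm l x :=
  exists_isNormalForm_of_len_lt ((len x).toNat + 1) hx (by omega)

end Braid

theorem positive_braid_normal_form_general (n : ℕ) (x : BraidGroup n)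
    (hx : x ∈ PosBraid n) :
    (∃! l : List (BraidGroup n),
      (∀ s ∈ l, Simple s) ∧ List.Chain' GNormal l ∧
      (∀ h : l ≠ [], l.getLast h ≠ 1) ∧ l.prod = x) ∧
    ∀ l : List (BraidGroup n),
      ((∀ s ∈ l, Simple s) ∧ List.Chain' GNormal l ∧
        (∀ h : l ≠ [], l.getLast h ≠ 1) ∧ l.prod = x) →
      ∀ h : l ≠ [], IsLeftGcd (l.head h) x (braidDelta n) := by
  obtain ⟨l, hl⟩ := Braid.exists_isNormalForm hx
  exact ⟨⟨l, hl, fun l' hl' => Braid.IsNormalForm.unique hl' hl⟩,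
    fun l hl => Braid.IsNormalForm.isLeftGcd_head hl⟩

/-- Every positive braid `x ≠ 1` admits a unique normal decomposition
`x = s_1 ⋯ s_p` into simple braids with `s_p ≠ 1`; moreover the first factor is
`gcd_L(x, Δ_n)`. -/
theorem positive_braid_normal_form (n : ℕ) (x : BraidGroup n)
    (hx : x ∈ PosBraid n) (hx1 : x ≠ 1) :
    (∃! l : List (BraidGroup n),
      (∀ s ∈ l, Simple s) ∧ List.Chain' GNormal l ∧
      (∀ h : l ≠ [], l.getLast h ≠ 1) ∧ l.prod = x) ∧
    ∀ l : List (BraidGroup n),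
      ((∀ s ∈ l, Simple s) ∧ List.Chain' GNormal l ∧
        (∀ h : l ≠ [], l.getLast h ≠ 1) ∧ l.prod = x) →
      ∀ h : l ≠ [], IsLeftGcd (l.head h) x (braidDelta n) :=
  positive_braid_normal_form_general n x hx
end

section
/- Reducing a handle preserves the represented braid: if w = σ_i^e w_0 σ_{i+1}^d w_1 ... w_m σ_i^{-e} is a σ_i-handle and w' = w_0 (σ_{i+1}^{-e} σ_i^d σ_{i+1}^e) w_1 ... (σ_{i+1}^{-e} σ_i^d σ_{i+1}^e) w_m is its reduct, then w and w' represent the same element of B_n. -/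
/-- One step of reduction of a `σ_i`-handle.  In the first case the handle
contains no letter `σ_{i+1}^{±1}` (so `m = 0`); in the second case the factors
`w_0, …, w_m` (with `m ≥ 1`) are separated by the letters `σ_{i+1}^d`, and each
of them is replaced by `σ_{i+1}^{-e} σ_i^d σ_{i+1}^e` in the reduct. -/
inductive HandleRed {n : ℕ} (i : Fin (n - 1)) : BWord n → BWord n → Prop where
  | simple (u v w0 : BWord n) (e : Bool)
      (hw : ∀ x ∈ w0, (i : ℕ) + 1 < ((x.1 : Fin (n - 1)) : ℕ)) :
      HandleRed i (u ++ [(i, e)] ++ w0 ++ [(i, !e)] ++ v) (u ++ w0 ++ v)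
  | sep (u v : BWord n) (j : Fin (n - 1)) (hj : (j : ℕ) = (i : ℕ) + 1)
      (e d : Bool) (ws : List (BWord n)) (hlen : 2 ≤ ws.length)
      (hw : ∀ u' ∈ ws, ∀ x ∈ u', (i : ℕ) + 1 < ((x.1 : Fin (n - 1)) : ℕ)) :
      HandleRed i (u ++ [(i, e)] ++ List.intercalate [(j, d)] ws ++ [(i, !e)] ++ v)
                  (u ++ List.intercalate [(j, !e), (i, d), (j, e)] ws ++ v)

/-! Write `g = σ_i^e`. By the far commutation relations `g` commutes with every factor `w_j`
of the handle, and by the braid relation `g σ_{i+1}^d g⁻¹ = σ_{i+1}^{-e} σ_i^d σ_{i+1}^e`.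
So conjugating `w_0 σ_{i+1}^d w_1 ⋯ σ_{i+1}^d w_m` by `g` fixes the `w_j` and replaces each
separating letter by its reduct, which is exactly the reduced word. -/

def signedPow {G : Type*} [Group G] (x : G) (e : Bool) : G :=
  if e then x else x⁻¹

section signedPow

variable {G : Type*} [Group G]

@[simp]
theorem signedPow_true (x : G) : signedPow x true = x := rfl

@[simp]
theorem signedPow_false (x : G) : signedPow x false = x⁻¹ := rfl

@[simp]
theorem signedPow_not (x : G) (e : Bool) : signedPow x (!e) = (signedPow x e)⁻¹ := by
  cases e <;> simp

theorem Commute.signedPow_right {x y : G} (h : Commute x y) (d : Bool) :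
    Commute x (signedPow y d) := by
  cases d <;> simp [h, h.inv_right]

theorem signedPow_conj_of_braid {a b : G} (h : a * b * a = b * a * b) (e d : Bool) :
    signedPow a e * signedPow b d * (signedPow a e)⁻¹ =
      signedPow b (!e) * signedPow a d * signedPow b e := by
  have pos : a * b * a⁻¹ = b⁻¹ * a * b :=
    calc a * b * a⁻¹ = b⁻¹ * (b * a * b) * a⁻¹ := by group
      _ = b⁻¹ * (a * b * a) * a⁻¹ := by rw [h]
      _ = b⁻¹ * a * b := by group
  have neg : a⁻¹ * b * a = b * a * b⁻¹ :=
    calc a⁻¹ * b * a = a⁻¹ * (b * a * b) * b⁻¹ := by group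
      _ = a⁻¹ * (a * b * a) * b⁻¹ := by rw [h]
      _ = b * a * b⁻¹ := by group
  cases e <;> cases d <;> simp only [signedPow_true, signedPow_false, signedPow_not, inv_inv]
  · simpa only [mul_inv_rev, inv_inv, mul_assoc] using congrArg (·⁻¹) neg
  · exact neg
  · simpa only [mul_inv_rev, inv_inv, mul_assoc] using congrArg (·⁻¹) pos
  · exact pos

end signedPow

namespace BraidGroup

variable {n : ℕ}

theorem braidGen_commute {i j : Fin (n - 1)} (h : (i : ℕ) + 2 ≤ j) :
    Commute (braidGen (n := n) i) (braidGen j) := by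
  have := PresentedGroup.mk_eq_mk_of_mul_inv_mem (rels := braidRels n) (Or.inl ⟨i, j, h, rfl⟩)
  rwa [map_mul, map_mul] at this

end BraidGroup

section evalWord

variable {n : ℕ}

@[simp]
theorem evalWord_nil : evalWord ([] : BWord n) = 1 := rfl

@[simp]
theorem evalWord_cons (x : Fin (n - 1) × Bool) (w : BWord n) :
    evalWord (x :: w) = signedPow (braidGen x.1) x.2 * evalWord w := rfl

@[simp]
theorem evalWord_append (u v : BWord n) : evalWord (u ++ v) = evalWord u * evalWord v := by
  simp [evalWord]

theorem commute_evalWord {g : BraidGroup n} {w : BWord n}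
    (h : ∀ x ∈ w, Commute g (braidGen x.1)) : Commute g (evalWord w) := by
  induction w with
  | nil => exact Commute.one_right g
  | cons x w ih =>
    rw [evalWord_cons]
    exact ((h x (by simp)).signedPow_right x.2).mul_right (ih fun y hy => h y (by simp [hy]))

theorem commute_evalWord_of_far {i : Fin (n - 1)} (e : Bool) {w : BWord n}
    (hw : ∀ x ∈ w, (i : ℕ) + 1 < x.1) : Commute (signedPow (braidGen i) e) (evalWord w) :=
  commute_evalWord fun x hx =>
    ((BraidGroup.braidGen_commute (by have := hw x hx; omega)).symm.signedPow_right e).symm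

theorem map_evalWord_intercalate (φ : BraidGroup n →* BraidGroup n) {S S' : BWord n}
    (hS : φ (evalWord S) = evalWord S') :
    ∀ (ws : List (BWord n)), (∀ w ∈ ws, φ (evalWord w) = evalWord w) →
      φ (evalWord (S.intercalate ws)) = evalWord (S'.intercalate ws)
  | [], _ => by simp
  | [w], hws => by simpa using hws w (by simp)
  | w :: w' :: ws, hws => by
    rw [List.intercalate_cons_cons, List.intercalate_cons_cons, evalWord_append, evalWord_append,
      evalWord_append, evalWord_append, map_mul, map_mul, hS, hws w (by simp),
      map_evalWord_intercalate φ hS (w' :: ws) fun v hv => hws v (List.mem_cons_of_mem w hv)]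

end evalWord

/-- Reducing a handle preserves the represented braid: the handle and its
reduct represent the same element of `B_n`. -/
theorem handle_reduction_equiv (n : ℕ) (i : Fin (n - 1)) (w w' : BWord n)
    (h : HandleRed i w w') : evalWord w = evalWord w' := by
  cases h with
  | simple u v w0 e hw =>
    simp only [evalWord_append, evalWord_cons, evalWord_nil, mul_one, signedPow_not]
    rw [mul_assoc (evalWord u), (commute_evalWord_of_far e hw).eq]
    group
  | sep u v j hj e d ws _ hw =>
    let g := signedPow (braidGen i) e
    have hletter : MulAut.conj g (evalWord [(j, d)]) = evalWord [(j, !e), (i, d), (j, e)] := by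
      simpa [mul_assoc] using signedPow_conj_of_braid (BraidGroup.braidGen_braid hj.symm) e d
    have hfactor (w0 : BWord n) (hw0 : w0 ∈ ws) : MulAut.conj g (evalWord w0) = evalWord w0 :=
      (commute_evalWord_of_far e (hw w0 hw0)).mul_inv_cancel
    have hconj := map_evalWord_intercalate (MulAut.conj g).toMonoidHom hletter ws hfactor
    simp only [evalWord_append, evalWord_cons, evalWord_nil, mul_one, signedPow_not]
    rw [← hconj]
    simp [g, mul_assoc]
end
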